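/- arXiv:2011.08360 — 2 statements merged into one kernel-verified Lean document; each statement's English description precedes it below -/
import Mathlib

section
/- Let X̄ ∈ ℝ^{p₁×p₂} be a rank-r matrix with singular value decomposition X̄ = Ū Σ̄ V̄ᵀ, and let Uᵗ ∈ ℝ^{p₁×r} have orthonormal columns. If B = Uᵗᵀ X̄ Vᵗ is invertible (where Vᵗ ∈ ℝ^{p₂×r} has orthonormal columns), then X̄ Vᵗ (Uᵗᵀ X̄ Vᵗ)⁻¹ (X̄ᵀ Uᵗ)ᵀ = X̄. -/
open Matrix
noncomputable section

/-- Frobenius norm of a real matrix. -/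
def frob {m n : Type*} [Fintype m] [Fintype n] (A : Matrix m n ℝ) : ℝ :=
  Real.sqrt (∑ i, ∑ j, (A i j) ^ 2)

/-- Spectral (operator ℓ²→ℓ²) norm of a real matrix. -/
def spec {m n : Type*} [Fintype m] [Fintype n] [DecidableEq n] (A : Matrix m n ℝ) : ℝ :=
  ‖LinearMap.toContinuousLinearMap (Matrix.toEuclideanLin A)‖

/-- Nuclear norm: sum of singular values (square roots of eigenvalues of AᵀA). -/
def nuc {m n : Type*} [Fintype m] [Fintype n] [DecidableEq n] (A : Matrix m n ℝ) : ℝ :=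
  ∑ i, Real.sqrt ((show (Aᵀ * A).IsHermitian by simpa using Matrix.isHermitian_conjTranspose_mul_self A).eigenvalues i)

/- `L * X * R = (L * P) * (Q * R)` is a product of square matrices, so both factors are invertible
and cancel against their inverses. -/
theorem Matrix.mul_mul_inv_mul_eq_self_of_eq_mul {m n ι α : Type*} [Fintype m] [Fintype n] [Fintype ι]
    [DecidableEq ι] [CommRing α]
    {X : Matrix m n α} {P : Matrix m ι α} {Q : Matrix ι n α} (hX : X = P * Q)
    (L : Matrix ι m α) (R : Matrix n ι α) (hB : IsUnit (L * X * R)) :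
    X * R * (L * X * R)⁻¹ * (L * X) = X := by
  subst hX
  have hfac : L * (P * Q) * R = (L * P) * (Q * R) := by simp only [Matrix.mul_assoc]
  rw [hfac] at hB ⊢
  have hLP : IsUnit (L * P).det := (isUnit_iff_isUnit_det _).mp (isUnit_of_mul_isUnit_left hB)
  have hQR : IsUnit (Q * R).det := (isUnit_iff_isUnit_det _).mp (isUnit_of_mul_isUnit_right hB)
  calc P * Q * R * ((L * P) * (Q * R))⁻¹ * (L * (P * Q))
      = P * ((Q * R) * (Q * R)⁻¹) * ((L * P)⁻¹ * (L * P)) * Q := by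
        rw [Matrix.mul_inv_rev]; simp only [Matrix.mul_assoc]
    _ = P * Q := by rw [mul_nonsing_inv _ hQR, nonsing_inv_mul _ hLP, Matrix.mul_one, Matrix.mul_one]

theorem stmt_0_general {p₁ p₂ r : ℕ}
    (Xb : Matrix (Fin p₁) (Fin p₂) ℝ)
    (Ub : Matrix (Fin p₁) (Fin r) ℝ) (Sb : Matrix (Fin r) (Fin r) ℝ)
    (Vb : Matrix (Fin p₂) (Fin r) ℝ)
    (hXb : Xb = Ub * Sb * Vbᵀ)
    (Ut : Matrix (Fin p₁) (Fin r) ℝ) (Vt : Matrix (Fin p₂) (Fin r) ℝ)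
    (hB : IsUnit (Utᵀ * Xb * Vt)) :
    Xb * Vt * (Utᵀ * Xb * Vt)⁻¹ * (Xbᵀ * Ut)ᵀ = Xb := by
  rw [transpose_mul, transpose_transpose]
  exact mul_mul_inv_mul_eq_self_of_eq_mul hXb Utᵀ Vt hB

/-- If X̄ has rank r with SVD X̄ = Ū Σ̄ V̄ᵀ, Uᵗ, Vᵗ have orthonormal columns and
B = Uᵗᵀ X̄ Vᵗ is invertible, then X̄ Vᵗ B⁻¹ (X̄ᵀ Uᵗ)ᵀ = X̄. -/
theorem stmt_0 {p₁ p₂ r : ℕ}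
    (Xb : Matrix (Fin p₁) (Fin p₂) ℝ)
    (Ub : Matrix (Fin p₁) (Fin r) ℝ) (Sb : Matrix (Fin r) (Fin r) ℝ)
    (Vb : Matrix (Fin p₂) (Fin r) ℝ)
    (hXb : Xb = Ub * Sb * Vbᵀ)
    (hUb : Ubᵀ * Ub = 1) (hVb : Vbᵀ * Vb = 1)
    (hrank : Xb.rank = r)
    (Ut : Matrix (Fin p₁) (Fin r) ℝ) (Vt : Matrix (Fin p₂) (Fin r) ℝ)
    (hUt : Utᵀ * Ut = 1) (hVt : Vtᵀ * Vt = 1)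
    (hB : IsUnit (Utᵀ * Xb * Vt)) :
    Xb * Vt * (Utᵀ * Xb * Vt)⁻¹ * (Xbᵀ * Ut)ᵀ = Xb :=
  stmt_0_general Xb Ub Sb Vb hXb Ut Vt hB
end
end

section
/- Let F, F̂ ∈ ℝ^{p₁×r}, G, Ĝ ∈ ℝ^{r×r}, H, Ĥ ∈ ℝ^{r×p₂}. Suppose G and Ĝ are invertible, ‖F G⁻¹‖ ≤ λ₁, and ‖Ĝ⁻¹ Ĥ‖ ≤ λ₂ (spectral norms). Then ‖F̂ Ĝ⁻¹ Ĥ − F G⁻¹ H‖_F ≤ λ₂ ‖F̂ − F‖_F + λ₁ ‖Ĥ − H‖_F + λ₁ λ₂ ‖Ĝ − G‖_F. -/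
/-!
Telescoping, `F̂ Ĝ⁻¹ Ĥ - F G⁻¹ H = (F̂ - F) (Ĝ⁻¹ Ĥ) + (F G⁻¹) (Ĥ - H) + (F G⁻¹) (G - Ĝ) (Ĝ⁻¹ Ĥ)`,
and each term is bounded by `‖A B‖_F ≤ ‖A‖ ‖B‖_F` (and its transpose `‖A B‖_F ≤ ‖A‖_F ‖B‖`),
which holds column by column because `‖A‖` is the operator norm on `ℓ²`.
-/

open Matrix
noncomputable section

section Frobenius

attribute [local instance] Matrix.frobeniusSeminormedAddCommGroup

variable {m n : Type*} [Fintype m] [Fintype n]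

lemma frob_eq_frobenius_norm (A : Matrix m n ℝ) : frob A = ‖A‖ := by
  simp only [frob, frobenius_norm_def, Real.sqrt_eq_rpow, Real.rpow_two, Real.norm_eq_abs, sq_abs]

lemma frob_nonneg (A : Matrix m n ℝ) : 0 ≤ frob A :=
  Real.sqrt_nonneg _

lemma frob_add_le (A B : Matrix m n ℝ) : frob (A + B) ≤ frob A + frob B := by
  simpa only [frob_eq_frobenius_norm] using norm_add_le A B

lemma frob_sub_comm (A B : Matrix m n ℝ) : frob (A - B) = frob (B - A) := by
  simpa only [frob_eq_frobenius_norm] using norm_sub_rev A B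

lemma frob_transpose (A : Matrix m n ℝ) : frob Aᵀ = frob A := by
  simpa only [frob_eq_frobenius_norm] using frobenius_norm_transpose A

end Frobenius

section Spectral

open scoped Matrix.Norms.L2Operator

variable {m n : Type*} [Fintype m] [Fintype n]

lemma spec_eq_l2_opNorm [DecidableEq n] (A : Matrix m n ℝ) : spec A = ‖A‖ := rfl

lemma spec_nonneg [DecidableEq n] (A : Matrix m n ℝ) : 0 ≤ spec A :=
  norm_nonneg _

lemma spec_transpose [DecidableEq m] [DecidableEq n] (A : Matrix m n ℝ) : spec Aᵀ = spec A := by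
  simpa only [spec_eq_l2_opNorm, conjTranspose_eq_transpose_of_trivial]
    using l2_opNorm_conjTranspose A

lemma norm_toLp_mulVec_le_spec_mul [DecidableEq n] (A : Matrix m n ℝ) (v : n → ℝ) :
    ‖WithLp.toLp 2 (A *ᵥ v)‖ ≤ spec A * ‖WithLp.toLp 2 v‖ :=
  (LinearMap.toContinuousLinearMap (toEuclideanLin A)).le_opNorm (WithLp.toLp 2 v)

end Spectral

lemma frob_sq_eq_sum_norm_col_sq {m n : Type*} [Fintype m] [Fintype n] (A : Matrix m n ℝ) :
    frob A ^ 2 = ∑ j, ‖WithLp.toLp 2 (fun i => A i j)‖ ^ 2 := by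
  rw [frob, Real.sq_sqrt (by positivity), Finset.sum_comm]
  simp [EuclideanSpace.real_norm_sq_eq]

section Product

variable {m n l : Type*} [Fintype m] [Fintype n] [Fintype l]

lemma frob_mul_le_spec_mul_frob [DecidableEq n] (A : Matrix m n ℝ) (B : Matrix n l ℝ) :
    frob (A * B) ≤ spec A * frob B := by
  refine (pow_le_pow_iff_left₀ (frob_nonneg _)
    (mul_nonneg (spec_nonneg A) (frob_nonneg B)) two_ne_zero).1 ?_
  calc frob (A * B) ^ 2 = ∑ j, ‖WithLp.toLp 2 (A *ᵥ fun k => B k j)‖ ^ 2 :=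
        frob_sq_eq_sum_norm_col_sq _
    _ ≤ ∑ j, (spec A * ‖WithLp.toLp 2 (fun k => B k j)‖) ^ 2 := by
        gcongr with j
        exact norm_toLp_mulVec_le_spec_mul A _
    _ = (spec A * frob B) ^ 2 := by
        simp only [mul_pow, frob_sq_eq_sum_norm_col_sq B, Finset.mul_sum]

lemma frob_mul_le_frob_mul_spec [DecidableEq n] [DecidableEq l] (A : Matrix m n ℝ)
    (B : Matrix n l ℝ) : frob (A * B) ≤ frob A * spec B := by
  simpa only [← transpose_mul, frob_transpose, spec_transpose, mul_comm (spec B)]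
    using frob_mul_le_spec_mul_frob Bᵀ Aᵀ

lemma frob_mul_le_of_spec_left_le [DecidableEq n] {A : Matrix m n ℝ} {a : ℝ} (hA : spec A ≤ a)
    (B : Matrix n l ℝ) : frob (A * B) ≤ a * frob B :=
  (frob_mul_le_spec_mul_frob A B).trans (mul_le_mul_of_nonneg_right hA (frob_nonneg B))

lemma frob_mul_le_of_spec_right_le [DecidableEq n] [DecidableEq l] (A : Matrix m n ℝ)
    {B : Matrix n l ℝ} {b : ℝ} (hB : spec B ≤ b) : frob (A * B) ≤ b * frob A :=
  (frob_mul_le_frob_mul_spec A B).trans <| by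
    rw [mul_comm]
    exact mul_le_mul_of_nonneg_right hB (frob_nonneg A)

end Product

lemma mul_inv_mul_sub_mul_inv_mul {R m n l : Type*} [CommRing R] [Fintype n] [DecidableEq n]
    (F Fh : Matrix m n R) {G Gh : Matrix n n R} (H Hh : Matrix n l R) (hG : IsUnit G)
    (hGh : IsUnit Gh) :
    Fh * Gh⁻¹ * Hh - F * G⁻¹ * H =
      (Fh - F) * (Gh⁻¹ * Hh) + F * G⁻¹ * (Hh - H) + F * G⁻¹ * ((G - Gh) * (Gh⁻¹ * Hh)) := by
  rw [isUnit_iff_isUnit_det] at hG hGh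
  simp only [Matrix.sub_mul, Matrix.mul_sub, Matrix.mul_assoc,
    nonsing_inv_mul_cancel_left _ _ hG, mul_nonsing_inv_cancel_left _ _ hGh]
  abel

/-- Perturbation bound for products F G⁻¹ H (Lemma FGH). -/
theorem stmt_6 {p₁ p₂ r : ℕ}
    (F Fh : Matrix (Fin p₁) (Fin r) ℝ) (G Gh : Matrix (Fin r) (Fin r) ℝ)
    (H Hh : Matrix (Fin r) (Fin p₂) ℝ)
    (hG : IsUnit G) (hGh : IsUnit Gh)
    (lam₁ lam₂ : ℝ)
    (h₁ : spec (F * G⁻¹) ≤ lam₁) (h₂ : spec (Gh⁻¹ * Hh) ≤ lam₂) :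
    frob (Fh * Gh⁻¹ * Hh - F * G⁻¹ * H) ≤
      lam₂ * frob (Fh - F) + lam₁ * frob (Hh - H) + lam₁ * lam₂ * frob (Gh - G) := by
  have hlam₁ : 0 ≤ lam₁ := (spec_nonneg _).trans h₁
  rw [mul_inv_mul_sub_mul_inv_mul F Fh H Hh hG hGh, frob_sub_comm Gh G, mul_assoc lam₁]
  refine (frob_add_le _ _).trans (add_le_add ((frob_add_le _ _).trans (add_le_add ?_ ?_)) ?_)
  · exact frob_mul_le_of_spec_right_le _ h₂
  · exact frob_mul_le_of_spec_left_le h₁ _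
  · calc frob (F * G⁻¹ * ((G - Gh) * (Gh⁻¹ * Hh)))
        ≤ lam₁ * frob ((G - Gh) * (Gh⁻¹ * Hh)) := frob_mul_le_of_spec_left_le h₁ _
      _ ≤ lam₁ * (lam₂ * frob (G - Gh)) := by
        gcongr
        exact frob_mul_le_of_spec_right_le _ h₂
end
end
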